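/- For every integer m ≥ 3, the independence number of the pair graph of the wheel graph W_{m,1} equals the independence number of the pair graph of the cycle C_m plus 1. -/

import Mathlib

/-- The independence number of a graph: the supremum of sizes of independent sets. -/
noncomputable def indepNum {V : Type*} (G : SimpleGraph V) : ℕ :=
  sSup {n | ∃ s : Finset V, s.card = n ∧ ∀ a ∈ s, ∀ b ∈ s, ¬ G.Adj a b}

/-- The path graph on `n` vertices `0, 1, ..., n-1`. -/
def pathG (n : ℕ) : SimpleGraph (Fin n) :=
  SimpleGraph.fromRel (fun i j => (i : ℕ) + 1 = (j : ℕ))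

/-- The cycle graph on `n` vertices `0, 1, ..., n-1`. -/
def cycleG (n : ℕ) : SimpleGraph (Fin n) :=
  SimpleGraph.fromRel (fun i j => (i : ℕ) + 1 = (j : ℕ) ∨ ((i : ℕ) = 0 ∧ (j : ℕ) = n - 1))

/-- The join of a graph `G` with a single extra vertex. -/
def joinK1 {V : Type*} (G : SimpleGraph V) : SimpleGraph (V ⊕ Unit) :=
  SimpleGraph.fromRel (fun a b =>
    (∃ x y, G.Adj x y ∧ a = Sum.inl x ∧ b = Sum.inl y) ∨ (a.isLeft ∧ b.isRight))

/-- The fan graph `F_{m,1} = P_m + K_1`. -/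
def fanG (m : ℕ) : SimpleGraph (Fin m ⊕ Unit) := joinK1 (pathG m)

/-- The wheel graph `W_{m,1} = C_m + K_1`. -/
def wheelG (m : ℕ) : SimpleGraph (Fin m ⊕ Unit) := joinK1 (cycleG m)

/-- The `k`-token graph: vertices are `k`-subsets of `V(G)`, two subsets adjacent
whenever their symmetric difference is an edge of `G`. -/
def tokenGraph {V : Type*} [DecidableEq V] (k : ℕ) (G : SimpleGraph V) :
    SimpleGraph {A : Finset V // A.card = k} :=
  SimpleGraph.fromRel (fun A B => ∃ a b : V, G.Adj a b ∧ symmDiff A.1 B.1 = {a, b})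

/-- The double vertex graph `G^(2)`: the `2`-token graph of `G`. -/
def doubleVertexGraph {V : Type*} [DecidableEq V] (G : SimpleGraph V) :
    SimpleGraph {A : Finset V // A.card = 2} :=
  tokenGraph 2 G

/-- The pair graph (complete double vertex graph) `C(G)`: vertices are the 2-multisets
of `V(G)`; `{a,x}` and `{a,y}` (distinct) are adjacent iff `x` and `y` are adjacent in `G`. -/
def pairGraph {V : Type*} (G : SimpleGraph V) : SimpleGraph (Sym2 V) :=
  SimpleGraph.fromRel (fun s t => ∃ a x y : V, G.Adj x y ∧ s = Sym2.mk a x ∧ t = Sym2.mk a y)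

/-!
Write `∞` for the apex of `G + K₁`. The vertex `{∞, ∞}` of `C(G + K₁)` is adjacent only to the
vertices `{∞, x}`, so adding it to a copy of an independent set of `C(G)` gives
`α(C(G + K₁)) ≥ α(C(G)) + 1`. Conversely, collapse each `{x, ∞}` to `{x, x}`: on an independent
set avoiding `{∞, ∞}` this map is injective, because `{x, ∞}` and `{x, x}` are adjacent, and its
image is independent in `C(G)`. The wheel is the case `G = C_m`.
-/

open Sum Finset

section

variable {V W : Type*} {G : SimpleGraph V} {H : SimpleGraph W}

theorem indepNum_eq_indepNum : indepNum G = G.indepNum := by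
  unfold indepNum SimpleGraph.indepNum
  congr! 3 with n
  refine exists_congr fun s => ?_
  rw [SimpleGraph.isNIndepSet_iff, and_comm, SimpleGraph.isIndepSet_iff]
  refine and_congr_left' ⟨fun h a ha b hb _ => h a ha b hb, fun h a ha b hb hab => ?_⟩
  exact h ha hb hab.ne hab

theorem pairGraph_adj_mk {u v w z : V} :
    (pairGraph G).Adj s(u, v) s(w, z) ↔ s(u, v) ≠ s(w, z) ∧
      (u = w ∧ G.Adj v z ∨ u = z ∧ G.Adj v w ∨ v = w ∧ G.Adj u z ∨ v = z ∧ G.Adj u w) := by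
  simp only [pairGraph, SimpleGraph.fromRel_adj]
  refine and_congr_right fun _ => ⟨?_, ?_⟩
  · simp only [Sym2.eq_iff]
    rintro (⟨a, x, y, hxy, h1, h2⟩ | ⟨a, x, y, hxy, h1, h2⟩) <;> grind [SimpleGraph.adj_symm]
  · rintro (⟨rfl, h⟩ | ⟨rfl, h⟩ | ⟨rfl, h⟩ | ⟨rfl, h⟩)
    · exact .inl ⟨u, v, z, h, rfl, rfl⟩
    · exact .inl ⟨u, v, w, h, rfl, Sym2.eq_swap⟩
    · exact .inl ⟨v, u, z, h, Sym2.eq_swap, rfl⟩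
    · exact .inl ⟨v, u, w, h, Sym2.eq_swap, Sym2.eq_swap⟩

@[simp] theorem joinK1_adj_inl_inl {x y : V} : (joinK1 G).Adj (inl x) (inl y) ↔ G.Adj x y := by
  simpa [joinK1, G.adj_comm y x] using G.ne_of_adj

@[simp] theorem joinK1_adj_inl_inr (x : V) (u : Unit) : (joinK1 G).Adj (inl x) (inr u) := by
  simp [joinK1]

@[simp] theorem joinK1_adj_inr_inl (x : V) (u : Unit) : (joinK1 G).Adj (inr u) (inl x) := by
  simp [joinK1]

theorem pairGraph_adj_map (f : G ↪g H) {p q : Sym2 V} :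
    (pairGraph H).Adj (p.map f) (q.map f) ↔ (pairGraph G).Adj p q := by
  induction p using Sym2.ind with | _ u v =>
  induction q using Sym2.ind with | _ w z =>
  simp [pairGraph_adj_mk]

/-- The value `s(d, d)` at `s(inr (), inr ())` is arbitrary. -/
def contractApex (d : V) : Sym2 (V ⊕ Unit) → Sym2 V :=
  Sym2.lift ⟨fun a b =>
    match a, b with
    | inl x, inl y => s(x, y)
    | inl x, inr _ => s(x, x)
    | inr _, inl y => s(y, y)
    | inr _, inr _ => s(d, d),
   by rintro (x|x) (y|y) <;> simp [Sym2.eq_swap]⟩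

@[simp] theorem contractApex_inl_inl (d x y : V) : contractApex d s(inl x, inl y) = s(x, y) :=
  rfl

@[simp] theorem contractApex_inl_inr (d x : V) (u : Unit) :
    contractApex d s(inl x, inr u) = s(x, x) :=
  rfl

@[simp] theorem contractApex_inr_inl (d y : V) (u : Unit) :
    contractApex d s(inr u, inl y) = s(y, y) :=
  rfl

theorem eq_or_adj_of_contractApex_eq {d : V} {s t : Sym2 (V ⊕ Unit)}
    (hs : s ≠ s(inr (), inr ())) (ht : t ≠ s(inr (), inr ()))
    (h : contractApex d s = contractApex d t) : s = t ∨ (pairGraph (joinK1 G)).Adj s t := by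
  induction s using Sym2.ind with | _ a b =>
  induction t using Sym2.ind with | _ c e =>
  rcases a with x | ⟨⟨⟩⟩ <;> rcases b with y | ⟨⟨⟩⟩ <;> rcases c with z | ⟨⟨⟩⟩ <;>
    rcases e with w | ⟨⟨⟩⟩ <;>
    simp_all [pairGraph_adj_mk] <;> tauto

theorem adj_of_adj_contractApex {d : V} {s t : Sym2 (V ⊕ Unit)}
    (hs : s ≠ s(inr (), inr ())) (ht : t ≠ s(inr (), inr ()))
    (h : (pairGraph G).Adj (contractApex d s) (contractApex d t)) :
    (pairGraph (joinK1 G)).Adj s t := by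
  induction s using Sym2.ind with | _ a b =>
  induction t using Sym2.ind with | _ c e =>
  rcases a with x | ⟨⟨⟩⟩ <;> rcases b with y | ⟨⟨⟩⟩ <;> rcases c with z | ⟨⟨⟩⟩ <;>
    rcases e with w | ⟨⟨⟩⟩ <;>
    simp_all [pairGraph_adj_mk] <;> tauto

theorem pairGraph_joinK1_not_adj_inr_map_inl (p : Sym2 V) :
    ¬ (pairGraph (joinK1 G)).Adj s(inr (), inr ()) (p.map inl) := by
  induction p using Sym2.ind with | _ x y => simp [pairGraph_adj_mk]

variable (G)

def joinK1Embedding : G ↪g joinK1 G :=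
  ⟨.inl, joinK1_adj_inl_inl⟩

theorem indepNum_pairGraph_add_one_le [Finite V] :
    (pairGraph G).indepNum + 1 ≤ (pairGraph (joinK1 G)).indepNum := by
  classical
  obtain ⟨S, hS⟩ := (pairGraph G).exists_isNIndepSet_indepNum
  set f := (joinK1Embedding G).toEmbedding.sym2Map
  have hf : ∀ p, f p = p.map inl := fun _ => rfl
  have hnot : s(inr (), inr ()) ∉ S.map f := by
    simp only [mem_map, hf, not_exists, not_and]
    rintro p - hp
    obtain ⟨a, -, ha⟩ := Sym2.mem_map.mp (hp ▸ Sym2.mem_mk_left (inr ()) (inr ()))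
    exact inl_ne_inr ha
  have hT : (pairGraph (joinK1 G)).IsIndepSet ↑(insert s(inr (), inr ()) (S.map f)) := by
    rw [coe_insert, coe_map]
    refine Set.Pairwise.insert (Set.Pairwise.image fun p hp q hq hpq => ?_) ?_
    · exact (pairGraph_adj_map (joinK1Embedding G)).not.mpr (hS.isIndepSet hp hq hpq)
    · rintro _ ⟨p, -, rfl⟩ -
      exact ⟨pairGraph_joinK1_not_adj_inr_map_inl p,
        fun h => pairGraph_joinK1_not_adj_inr_map_inl p h.symm⟩
  calc (pairGraph G).indepNum + 1 = #(insert s(inr (), inr ()) (S.map f)) := by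
        rw [card_insert_of_notMem hnot, card_map, hS.card_eq]
    _ ≤ _ := hT.card_le_indepNum

theorem indepNum_pairGraph_joinK1_le [Finite V] [Nonempty V] :
    (pairGraph (joinK1 G)).indepNum ≤ (pairGraph G).indepNum + 1 := by
  classical
  obtain ⟨d⟩ := ‹Nonempty V›
  obtain ⟨T, hT⟩ := (pairGraph (joinK1 G)).exists_isNIndepSet_indepNum
  set T' := T.erase s(inr (), inr ())
  have hT' : ∀ s ∈ T', ∀ t ∈ T', ¬ (pairGraph (joinK1 G)).Adj s t := fun s hs t ht hst =>
    hT.isIndepSet (mem_of_mem_erase hs) (mem_of_mem_erase ht) hst.ne hst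
  have hinj : Set.InjOn (contractApex d) T' := fun s hs t ht hst =>
    (eq_or_adj_of_contractApex_eq (ne_of_mem_erase hs) (ne_of_mem_erase ht) hst).resolve_right
      (hT' s hs t ht)
  have hind : (pairGraph G).IsIndepSet ↑(T'.image (contractApex d)) := by
    rw [coe_image]
    exact Set.Pairwise.image fun s hs t ht _ hst => hT' s hs t ht
      (adj_of_adj_contractApex (ne_of_mem_erase hs) (ne_of_mem_erase ht) hst)
  calc (pairGraph (joinK1 G)).indepNum = #T := hT.card_eq.symm
    _ ≤ #T' + 1 := by have : #T - 1 ≤ #T' := pred_card_le_card_erase; omega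
    _ = #(T'.image (contractApex d)) + 1 := by rw [card_image_of_injOn hinj]
    _ ≤ (pairGraph G).indepNum + 1 := by gcongr; exact hind.card_le_indepNum

theorem indepNum_pairGraph_joinK1 [Finite V] [Nonempty V] :
    indepNum (pairGraph (joinK1 G)) = indepNum (pairGraph G) + 1 := by
  rw [indepNum_eq_indepNum, indepNum_eq_indepNum]
  exact (indepNum_pairGraph_joinK1_le G).antisymm (indepNum_pairGraph_add_one_le G)

end

/-- For every integer `m ≥ 3`, `α(C(W_{m,1})) = α(C(C_m)) + 1`. -/
theorem indepNum_pairGraph_wheel (m : ℕ) (hm : 3 ≤ m) :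
    indepNum (pairGraph (wheelG m)) = indepNum (pairGraph (cycleG m)) + 1 := by
  have : Nonempty (Fin m) := Fin.pos_iff_nonempty.mp (by omega)
  exact indepNum_pairGraph_joinK1 (cycleG m)
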